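/- arXiv:2605.02251 — 4 statements merged into one kernel-verified Lean document; each statement's English description precedes it below -/
import Mathlib

section
/- Let q, t ∈ ℂ with 0 < |q| < 1, t ≠ 0 and t ≠ q^m for every m ∈ ℤ. For d ∈ ℤ and n ∈ ℕ define S_{d,n} := Σ_{j=0}^{2n} (t;q)_j (t;q)_{2n−j} (t^{−1};q)_{j+d} t^{j+d} / ((q;q)_j (q;q)_{2n−j} (t;q)_{j+d}), where (t^{−1};q)_{j+d} and (t;q)_{j+d} are ℤ-indexed q-Pochhammer symbols. Then for all d ∈ ℤ and n ∈ ℕ, S_{d,n} = (t²;q)_{2n} (q^{d};q)_{2n} (t^{−1};q)_d t^d / ((q;q)_{2n} (t;q)_{2n+d}), where (q^{d};q)_{2n} = ∏_{i=0}^{2n−1} (1 − q^{d+i}). -/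
/-
Pulling `(a;q)_{m+j} = (a;q)_m (aq^m;q)_j` out of the ℤ-indexed symbols turns `S_{d,n}` into
`(t⁻¹;q)_d t^d / (t;q)_d` times the terminating sum, with `u = t⁻¹q^d` and `N = 2n`,
`∑_j (t;q)_j (t;q)_{N-j} (u;q)_j t^j / ((q;q)_j (q;q)_{N-j} (t²u;q)_j)`,
which q-Pfaff–Saalschütz evaluates to `(t²;q)_N (tu;q)_N / ((q;q)_N (t²u;q)_N)`.
That evaluation is proved by induction on `N` from the recurrence
`(1 - q^{N+1})(1 - t²uq^N) S_{N+1} = (1 - t²q^N)(1 - tuq^N) S_N`, which telescopes from a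
termwise identity (a WZ pair).
-/

open Finset

/-- Finite q-Pochhammer symbol `(a;q)_n`. -/
noncomputable def qPoch (a q : ℂ) (n : ℕ) : ℂ := ∏ i ∈ Finset.range n, (1 - a * q ^ i)

/-- Infinite q-Pochhammer symbol `(a;q)_∞`. -/
noncomputable def qPochInf (a q : ℂ) : ℂ := ∏' i : ℕ, (1 - a * q ^ i)

/-- ℤ-indexed q-Pochhammer symbol `(a;q)_m := (a;q)_∞ / (a q^m;q)_∞`. -/
noncomputable def qPochZ (a q : ℂ) (m : ℤ) : ℂ := qPochInf a q / qPochInf (a * q ^ m) q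

theorem one_sub_mul_zpow_ne_zero {K : Type*} [Field K] {q t : K} (htq : ∀ m : ℤ, t ≠ q ^ m)
    (m : ℤ) : 1 - t * q ^ m ≠ 0 := fun h ↦
  htq (-m) (by rw [zpow_neg]; exact eq_inv_of_mul_eq_one_left (sub_eq_zero.1 h).symm)

theorem one_sub_mul_pow_ne_zero {K : Type*} [NormedDivisionRing K] {q : K} (hq : ‖q‖ < 1)
    (i : ℕ) : 1 - q * q ^ i ≠ 0 := by
  rw [← pow_succ']
  exact sub_ne_zero.2 fun h ↦ (pow_lt_one₀ (norm_nonneg q) hq i.succ_ne_zero).ne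
    (by rw [← norm_pow, ← h, norm_one])

theorem sum_convolution_recurrence {R : Type*} [CommRing R] (q t u : R) (P Q : ℕ → R)
    (hP : ∀ j, P (j + 1) * ((1 - q ^ (j + 1)) * (1 - t ^ 2 * u * q ^ j)) =
      P j * (t * (1 - t * q ^ j) * (1 - u * q ^ j)))
    (hQ : ∀ k, Q (k + 1) * (1 - q ^ (k + 1)) = Q k * (1 - t * q ^ k)) (N : ℕ) :
    (∑ j ∈ range (N + 2), P j * Q (N + 1 - j)) * ((1 - q ^ (N + 1)) * (1 - t ^ 2 * u * q ^ N)) =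
      (∑ j ∈ range (N + 1), P j * Q (N - j)) * ((1 - t ^ 2 * q ^ N) * (1 - t * u * q ^ N)) := by
  set H : ℕ → R := fun i ↦
    P i * Q (N + 1 - i) * (1 - q ^ i) * (q ^ (N + 1 - i) - t ^ 2 * u * q ^ N)
  have termwise : ∀ j ∈ range (N + 1),
      P j * Q (N + 1 - j) * ((1 - q ^ (N + 1)) * (1 - t ^ 2 * u * q ^ N)) -
        P j * Q (N - j) * ((1 - t ^ 2 * q ^ N) * (1 - t * u * q ^ N)) = H j - H (j + 1) := by
    intro j hj
    obtain ⟨k, rfl⟩ := Nat.exists_eq_add_of_le (Nat.lt_succ_iff.1 (mem_range.1 hj))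
    simp only [H, show j + k + 1 - j = k + 1 by omega, show j + k - j = k by omega,
      show j + k + 1 - (j + 1) = k by omega]
    linear_combination (1 - t ^ 2 * u * q ^ (2 * j + k)) * P j * hQ k + q ^ k * Q k * hP j
  have telescope := sum_range_sub' H (N + 1)
  rw [← sum_congr rfl termwise, sum_sub_distrib, ← sum_mul, ← sum_mul] at telescope
  have boundary : H 0 - H (N + 1) =
      -(P (N + 1) * Q 0 * ((1 - q ^ (N + 1)) * (1 - t ^ 2 * u * q ^ N))) := by
    simp only [H, Nat.sub_self]
    ring
  rw [sum_range_succ, Nat.sub_self]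
  linear_combination telescope + boundary

theorem qPoch_succ (a q : ℂ) (n : ℕ) : qPoch a q (n + 1) = qPoch a q n * (1 - a * q ^ n) :=
  prod_range_succ _ _

theorem qPoch_ne_zero {a q : ℂ} (h : ∀ i : ℕ, 1 - a * q ^ i ≠ 0) (n : ℕ) : qPoch a q n ≠ 0 :=
  prod_ne_zero_iff.2 fun i _ ↦ h i

theorem sum_convolution_mul_qPoch (q t u : ℂ) (P Q : ℕ → ℂ)
    (hP : ∀ j, P (j + 1) * ((1 - q ^ (j + 1)) * (1 - t ^ 2 * u * q ^ j)) =
      P j * (t * (1 - t * q ^ j) * (1 - u * q ^ j)))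
    (hQ : ∀ k, Q (k + 1) * (1 - q ^ (k + 1)) = Q k * (1 - t * q ^ k))
    (h0 : P 0 * Q 0 = 1) (N : ℕ) :
    (∑ j ∈ range (N + 1), P j * Q (N - j)) * (qPoch q q N * qPoch (t ^ 2 * u) q N) =
      qPoch (t ^ 2) q N * qPoch (t * u) q N := by
  induction N with
  | zero => simp [qPoch, h0]
  | succ N ih =>
    simp only [qPoch_succ]
    linear_combination qPoch q q N * qPoch (t ^ 2 * u) q N *
      sum_convolution_recurrence q t u P Q hP hQ N +
      (1 - t ^ 2 * q ^ N) * (1 - t * u * q ^ N) * ih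

theorem qPoch_pfaff_saalschutz (q t u : ℂ) (hq : ∀ i : ℕ, 1 - q * q ^ i ≠ 0)
    (hv : ∀ i : ℕ, 1 - t ^ 2 * u * q ^ i ≠ 0) (N : ℕ) :
    ∑ j ∈ range (N + 1), qPoch t q j * qPoch t q (N - j) * qPoch u q j * t ^ j /
        (qPoch q q j * qPoch q q (N - j) * qPoch (t ^ 2 * u) q j) =
      qPoch (t ^ 2) q N * qPoch (t * u) q N / (qPoch q q N * qPoch (t ^ 2 * u) q N) := by
  have hqq := qPoch_ne_zero hq
  have hvq := qPoch_ne_zero hv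
  rw [eq_div_iff (mul_ne_zero (hqq N) (hvq N)), ← sum_convolution_mul_qPoch q t u
    (fun j ↦ qPoch t q j * qPoch u q j * t ^ j / (qPoch q q j * qPoch (t ^ 2 * u) q j))
    (fun k ↦ qPoch t q k / qPoch q q k) ?_ ?_ (by simp [qPoch]) N]
  · congr 1
    refine sum_congr rfl fun j _ ↦ ?_
    field_simp
  · intro j
    have := pow_succ' q j ▸ hq j
    simp only [qPoch_succ, ← pow_succ']
    rw [div_mul_eq_mul_div, div_mul_eq_mul_div,
      div_eq_div_iff (by simp [*]) (by simp [*])]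
    ring
  · intro k
    have := pow_succ' q k ▸ hq k
    simp only [qPoch_succ, ← pow_succ']
    rw [div_mul_eq_mul_div, div_mul_eq_mul_div,
      div_eq_div_iff (by simp [*]) (by simp [*])]
    ring

theorem qPoch_zpow {q : ℂ} (hq : q ≠ 0) (m : ℤ) (n : ℕ) :
    qPoch (q ^ m) q n = ∏ i ∈ range n, (1 - q ^ (m + i)) :=
  prod_congr rfl fun i _ ↦ by rw [zpow_add₀ hq, zpow_natCast]

theorem summable_norm_mul_pow (a : ℂ) {q : ℂ} (hq : ‖q‖ < 1) :
    Summable fun i : ℕ ↦ ‖-(a * q ^ i)‖ := by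
  simpa [norm_mul] using (summable_norm_geometric_of_norm_lt_one hq).mul_left ‖a‖

theorem multipliable_qPochInf (a : ℂ) {q : ℂ} (hq : ‖q‖ < 1) :
    Multipliable fun i : ℕ ↦ 1 - a * q ^ i := by
  simpa [sub_eq_add_neg] using multipliable_one_add_of_summable (summable_norm_mul_pow a hq)

theorem qPochInf_ne_zero {a q : ℂ} (hq : ‖q‖ < 1) (h : ∀ i : ℕ, 1 - a * q ^ i ≠ 0) :
    qPochInf a q ≠ 0 := by
  simpa [qPochInf, sub_eq_add_neg] using
    tprod_one_add_ne_zero_of_summable (by simpa [sub_eq_add_neg] using h)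
      (summable_norm_mul_pow a hq)

theorem qPochInf_eq_qPoch_mul (a : ℂ) {q : ℂ} (hq : ‖q‖ < 1) (n : ℕ) :
    qPochInf a q = qPoch a q n * qPochInf (a * q ^ n) q := by
  have hshift : (fun i : ℕ ↦ 1 - a * q ^ n * q ^ i) = fun i ↦ 1 - a * q ^ (i + n) := by
    funext i
    ring
  have htail := multipliable_qPochInf (a * q ^ n) hq
  rw [hshift] at htail
  rw [qPochInf, qPochInf, hshift, qPoch,
    htail.prod_mul_tprod_nat_mul' (f := fun i ↦ 1 - a * q ^ i)]

theorem qPochZ_natCast_add {a q : ℂ} (hq0 : q ≠ 0) (hq : ‖q‖ < 1) {m : ℤ}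
    (h : ∀ i : ℕ, 1 - a * q ^ m * q ^ i ≠ 0) (n : ℕ) :
    qPochZ a q (n + m) = qPochZ a q m * qPoch (a * q ^ m) q n := by
  have hshift : a * q ^ ((n : ℤ) + m) = a * q ^ m * q ^ n := by
    rw [zpow_add₀ hq0, zpow_natCast]
    ring
  have htail : qPochInf (a * q ^ m * q ^ n) q ≠ 0 :=
    qPochInf_ne_zero hq fun i ↦ by simpa [pow_add, mul_assoc] using h (n + i)
  have := qPoch_ne_zero h n
  rw [qPochZ, qPochZ, hshift, qPochInf_eq_qPoch_mul (a * q ^ m) hq n]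
  field_simp

/-- Equation (3.9): the closed-form evaluation of the auxiliary sum `S_{d,n}`,
obtained from the q-Pfaff–Saalschütz summation.  Here `(t⁻¹;q)_{j+d}`,
`(t;q)_{j+d}`, `(t⁻¹;q)_d` and `(t;q)_{2n+d}` are ℤ-indexed q-Pochhammer
symbols, and `(q^d;q)_{2n} = ∏_{i=0}^{2n-1} (1 - q^{d+i})` is a finite product
with integer exponents. -/
theorem S_evaluation (q t : ℂ)
    (hq0 : 0 < ‖q‖) (hq1 : ‖q‖ < 1)
    (ht0 : t ≠ 0) (htq : ∀ m : ℤ, t ≠ q ^ m) (d : ℤ) (n : ℕ) :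
    ∑ j ∈ Finset.range (2 * n + 1),
      qPoch t q j * qPoch t q (2 * n - j) * qPochZ t⁻¹ q ((j : ℤ) + d) * t ^ ((j : ℤ) + d) /
        (qPoch q q j * qPoch q q (2 * n - j) * qPochZ t q ((j : ℤ) + d)) =
      qPoch (t ^ 2) q (2 * n) * (∏ i ∈ Finset.range (2 * n), (1 - q ^ (d + (i : ℤ)))) *
        qPochZ t⁻¹ q d * t ^ d /
        (qPoch q q (2 * n) * qPochZ t q (2 * (n : ℤ) + d)) := by
  have hq : q ≠ 0 := norm_pos_iff.1 hq0
  have hfac (a : ℂ) (ha : ∀ m : ℤ, 1 - a * q ^ m ≠ 0) (i : ℕ) :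
      1 - a * q ^ d * q ^ i ≠ 0 := by
    simpa [zpow_add₀ hq, mul_assoc] using ha (d + i)
  have ht := hfac t (one_sub_mul_zpow_ne_zero htq)
  have ht' := hfac t⁻¹
    (one_sub_mul_zpow_ne_zero fun m h ↦ htq (-m) (by rw [zpow_neg, ← h, inv_inv]))
  have htu : t * (t⁻¹ * q ^ d) = q ^ d := by field_simp
  have ht2u : t ^ 2 * (t⁻¹ * q ^ d) = t * q ^ d := by field_simp
  have hsum : ∑ j ∈ range (2 * n + 1),
      qPoch t q j * qPoch t q (2 * n - j) * qPochZ t⁻¹ q ((j : ℤ) + d) * t ^ ((j : ℤ) + d) /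
        (qPoch q q j * qPoch q q (2 * n - j) * qPochZ t q ((j : ℤ) + d)) =
      (∑ j ∈ range (2 * n + 1), qPoch t q j * qPoch t q (2 * n - j) *
        qPoch (t⁻¹ * q ^ d) q j * t ^ j /
          (qPoch q q j * qPoch q q (2 * n - j) * qPoch (t ^ 2 * (t⁻¹ * q ^ d)) q j)) *
        (qPochZ t⁻¹ q d * t ^ d / qPochZ t q d) := by
    rw [sum_mul]
    refine sum_congr rfl fun j _ ↦ ?_
    rw [qPochZ_natCast_add hq hq1 ht', qPochZ_natCast_add hq hq1 ht, zpow_add₀ ht0,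
      zpow_natCast, ht2u]
    ring
  rw [hsum, qPoch_pfaff_saalschutz q t _ (one_sub_mul_pow_ne_zero hq1)
      (by simpa [ht2u] using ht), htu, ht2u, ← qPoch_zpow hq,
    show 2 * (n : ℤ) + d = ((2 * n : ℕ) : ℤ) + d by push_cast; ring,
    qPochZ_natCast_add hq hq1 ht]
  ring
end

section
/- Let q, t ∈ ℂ with 0 < |q| < 1, t ≠ 0 and t ≠ q^m for every m ∈ ℤ. For d ∈ ℤ and n ∈ ℕ define S_{d,n} := Σ_{j=0}^{2n} (t;q)_j (t;q)_{2n−j} (t^{−1};q)_{j+d} t^{j+d} / ((q;q)_j (q;q)_{2n−j} (t;q)_{j+d}), where (t^{−1};q)_{j+d} and (t;q)_{j+d} are ℤ-indexed q-Pochhammer symbols. Then for all l, n ∈ ℕ and every integer j with 0 ≤ j ≤ 2l, one has [2l choose j]_q · S_{j−l−n, n} = − [2l choose 2l−j]_q · S_{l−j−n+1, n}; consequently Σ_{j=0}^{2l} [2l choose j]_q S_{j−l−n,n} = − Σ_{j=0}^{2l} [2l choose j]_q S_{j−l−n+1,n}. -/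
open Finset

/-- q-binomial coefficient. -/
noncomputable def qBinom (q : ℂ) (M N : ℕ) : ℂ :=
  if N ≤ M then qPoch q q M / (qPoch q q N * qPoch q q (M - N)) else 0

/-- The auxiliary sum `S_{d,n}` of Section 3, with ℤ-indexed q-Pochhammer
symbols `(t⁻¹;q)_{j+d}` and `(t;q)_{j+d}`. -/
noncomputable def Ssum (q t : ℂ) (d : ℤ) (n : ℕ) : ℂ :=
  ∑ j ∈ Finset.range (2 * n + 1),
    qPoch t q j * qPoch t q (2 * n - j) * qPochZ t⁻¹ q ((j : ℤ) + d) * t ^ ((j : ℤ) + d) /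
      (qPoch q q j * qPoch q q (2 * n - j) * qPochZ t q ((j : ℤ) + d))

/-!
With `g k := qPochRatio q t k = (t⁻¹;q)_k t^k / (t;q)_k`, the step `k ↦ k + 1` multiplies `g` by
`r k := (t - q^k) / (1 - t q^k)`, and `r k * r (-k) = 1`. Hence `g k + g (1 - k)` is multiplied
by the nonzero factor `r k` under the same step; it vanishes at `k = 0`, so `g (1 - k) = -g k`
for all `k ∈ ℤ`. Reflecting the summation index `j ↦ 2n - j` in `S_{d,n}` then gives
`S_{d,n} = -S_{1-2n-d,n}`, and the pairing follows from the symmetry of the q-binomial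
coefficient.
-/

lemma multipliable_one_sub_mul_pow {q : ℂ} (hq : ‖q‖ < 1) (a : ℂ) :
    Multipliable fun i : ℕ => 1 - a * q ^ i := by
  simpa only [sub_eq_add_neg] using Complex.multipliable_one_add_of_summable
    ((summable_geometric_of_norm_lt_one hq).mul_left a).neg

lemma qPochInf_eq_one_sub_mul {q : ℂ} (hq : ‖q‖ < 1) (a : ℂ) :
    qPochInf a q = (1 - a) * qPochInf (a * q) q := by
  have hshift : ∀ i : ℕ, a * q ^ (i + 1) = a * q * q ^ i := fun i => by ring
  have htail : Multipliable fun i : ℕ => 1 - a * q ^ (i + 1) := by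
    simpa only [hshift] using multipliable_one_sub_mul_pow hq (a * q)
  simpa only [qPochInf, pow_zero, mul_one, hshift] using
    tprod_eq_zero_mul' (f := fun i : ℕ => 1 - a * q ^ i) htail

lemma qPochZ_add_one {q : ℂ} (hq0 : q ≠ 0) (hq1 : ‖q‖ < 1) {a : ℂ} {m : ℤ}
    (ha : a * q ^ m ≠ 1) : qPochZ a q (m + 1) = qPochZ a q m * (1 - a * q ^ m) := by
  have hfac : 1 - a * q ^ m ≠ 0 := sub_ne_zero.2 ha.symm
  rw [qPochZ, qPochZ, qPochInf_eq_one_sub_mul hq1 (a * q ^ m), mul_assoc, ← zpow_add_one₀ hq0,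
    div_mul_eq_div_div_swap, div_mul_cancel₀ _ hfac]

lemma qBinom_symm {q : ℂ} {M N : ℕ} (h : N ≤ M) : qBinom q M (M - N) = qBinom q M N := by
  rw [qBinom, qBinom, if_pos h, if_pos (Nat.sub_le M N), Nat.sub_sub_self h, mul_comm]

noncomputable def qPochRatio (q t : ℂ) (k : ℤ) : ℂ := qPochZ t⁻¹ q k * t ^ k / qPochZ t q k

section qPochRatio

variable {q t : ℂ}

lemma mul_zpow_ne_one (htq : ∀ m : ℤ, t ≠ q ^ m) (k : ℤ) : t * q ^ k ≠ 1 := fun h =>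
  htq (-k) (by rw [zpow_neg]; exact eq_inv_of_mul_eq_one_left h)

lemma qPochRatio_add_one (hq0 : q ≠ 0) (hq1 : ‖q‖ < 1) (ht0 : t ≠ 0)
    (htq : ∀ m : ℤ, t ≠ q ^ m) (k : ℤ) :
    qPochRatio q t (k + 1) = qPochRatio q t k * ((t - q ^ k) / (1 - t * q ^ k)) := by
  have hinv : t⁻¹ * q ^ k ≠ 1 := fun h => htq k ((inv_mul_eq_one₀ ht0).1 h)
  have hdir := mul_zpow_ne_one htq k
  have hden : 1 - t * q ^ k ≠ 0 := sub_ne_zero.2 hdir.symm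
  rw [qPochRatio, qPochRatio, qPochZ_add_one hq0 hq1 hinv, qPochZ_add_one hq0 hq1 hdir,
    zpow_add_one₀ ht0]
  field_simp

lemma qPochRatio_one_sub (hq0 : q ≠ 0) (hq1 : ‖q‖ < 1) (ht0 : t ≠ 0)
    (htq : ∀ m : ℤ, t ≠ q ^ m) (k : ℤ) :
    qPochRatio q t (1 - k) = -qPochRatio q t k := by
  refine eq_neg_of_add_eq_zero_right ?_
  set r : ℤ → ℂ := fun k => (t - q ^ k) / (1 - t * q ^ k)
  have hden : ∀ k : ℤ, 1 - t * q ^ k ≠ 0 := fun k => sub_ne_zero.2 (mul_zpow_ne_one htq k).symm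
  have hr_ne : ∀ k, r k ≠ 0 := fun k =>
    div_ne_zero (sub_ne_zero.2 (htq k)) (hden k)
  have hr_mul : ∀ k, r k * r (-k) = 1 := fun k => by
    have hqk : q ^ k * q ^ (-k) = 1 := by rw [← zpow_add₀ hq0, add_neg_cancel, zpow_zero]
    rw [div_mul_div_comm, div_eq_one_iff_eq (mul_ne_zero (hden k) (hden (-k)))]
    linear_combination (1 - t ^ 2) * hqk
  have hstep : ∀ k : ℤ, qPochRatio q t (k + 1) + qPochRatio q t (1 - (k + 1)) =
      r k * (qPochRatio q t k + qPochRatio q t (1 - k)) := fun k => by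
    have hback := qPochRatio_add_one hq0 hq1 ht0 htq (-k)
    rw [neg_add_eq_sub] at hback
    rw [show 1 - (k + 1) = -k by ring, qPochRatio_add_one hq0 hq1 ht0 htq k, hback]
    linear_combination -qPochRatio q t (-k) * hr_mul k
  induction k using Int.induction_on with
  | zero =>
    have h1 := qPochRatio_add_one hq0 hq1 ht0 htq 0
    have h1t : (1 : ℂ) - t ≠ 0 := sub_ne_zero.2 (by simpa using (htq 0).symm)
    rw [zero_add, zpow_zero, mul_one] at h1
    rw [sub_zero, h1]
    field_simp
    ring
  | succ k ih => rw [hstep, ih, mul_zero]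
  | pred k ih =>
    have h := hstep (-k - 1)
    rw [sub_add_cancel, ih, eq_comm, mul_eq_zero] at h
    exact h.resolve_left (hr_ne _)

end qPochRatio

lemma Ssum_eq_sum_mul_qPochRatio (q t : ℂ) (d : ℤ) (n : ℕ) :
    Ssum q t d n = ∑ j ∈ range (2 * n + 1),
      qPoch t q j * qPoch t q (2 * n - j) / (qPoch q q j * qPoch q q (2 * n - j)) *
        qPochRatio q t (j + d) := by
  refine sum_congr rfl fun j _ => ?_
  rw [qPochRatio]
  ring

lemma Ssum_eq_neg_Ssum {q t : ℂ} (hq0 : q ≠ 0) (hq1 : ‖q‖ < 1) (ht0 : t ≠ 0)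
    (htq : ∀ m : ℤ, t ≠ q ^ m) (d : ℤ) (n : ℕ) :
    Ssum q t d n = -Ssum q t (1 - 2 * n - d) n := by
  rw [Ssum_eq_sum_mul_qPochRatio, Ssum_eq_sum_mul_qPochRatio, ← sum_range_reflect,
    ← sum_neg_distrib]
  refine sum_congr rfl fun j hj => ?_
  have hj : j ≤ 2 * n := Nat.lt_succ_iff.1 (mem_range.1 hj)
  have hk : (j : ℤ) + (1 - 2 * n - d) = 1 - ((2 * n - j : ℕ) + d) := by
    push_cast [Nat.cast_sub hj]
    ring
  rw [Nat.add_sub_cancel, Nat.sub_sub_self hj, hk, qPochRatio_one_sub hq0 hq1 ht0 htq]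
  ring

/-- Equation (3.10): the key pairing observation in the proof of the new
conjugate Bailey pair (Theorem 3.1), together with its consequence for the
full sums. -/
theorem S_pairing (q t : ℂ)
    (hq0 : 0 < ‖q‖) (hq1 : ‖q‖ < 1)
    (ht0 : t ≠ 0) (htq : ∀ m : ℤ, t ≠ q ^ m) (l n : ℕ) :
    (∀ j : ℕ, j ≤ 2 * l →
      qBinom q (2 * l) j * Ssum q t ((j : ℤ) - l - n) n =
        -(qBinom q (2 * l) (2 * l - j) * Ssum q t ((l : ℤ) - j - n + 1) n)) ∧
    ∑ j ∈ Finset.range (2 * l + 1), qBinom q (2 * l) j * Ssum q t ((j : ℤ) - l - n) n =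
      -∑ j ∈ Finset.range (2 * l + 1),
        qBinom q (2 * l) j * Ssum q t ((j : ℤ) - l - n + 1) n := by
  have hpair : ∀ j : ℕ, j ≤ 2 * l →
      qBinom q (2 * l) j * Ssum q t ((j : ℤ) - l - n) n =
        -(qBinom q (2 * l) (2 * l - j) * Ssum q t ((l : ℤ) - j - n + 1) n) := fun j hj => by
    rw [Ssum_eq_neg_Ssum (norm_pos_iff.1 hq0) hq1 ht0 htq, qBinom_symm hj]
    ring_nf
  refine ⟨hpair, ?_⟩
  rw [← sum_range_reflect, ← sum_neg_distrib]
  refine sum_congr rfl fun j hj => ?_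
  have hj : j ≤ 2 * l := Nat.lt_succ_iff.1 (mem_range.1 hj)
  rw [Nat.add_sub_cancel, hpair _ (Nat.sub_le _ _), Nat.sub_sub_self hj]
  push_cast [Nat.cast_sub hj]
  ring_nf
end

section
/- Let q ∈ ℂ with 0 < |q| < 1. Then for all n, n' ∈ ℕ, Σ_{s=0}^{n} (−1)^{n−s} q^{(n−s)(n−s−1)/2} (q;q)_{s+n'} / ((q;q)_s² (q;q)_{n−s}) = q^{n²} (q;q)_{n'} [n' choose n]_q / (q;q)_n. In particular, this sum vanishes whenever n > n'. -/
/-!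
Clearing denominators turns the sum into `(q;q)_{n'}/(q;q)_n` times the q-Chu–Vandermonde
sum `∑ₛ (-1)^{n-s} q^{(n-s)(n-s-1)/2} [n, s] [s+n', s]`. By the finite and the inverse
q-binomial theorems the factors of this convolution are the coefficients of `∏_{i<n} (1 - q^i X)` and of
`∑ⱼ [n'+j, j] Xʲ = 1 / ∏_{i≤n'} (1 - q^i X)`, so the sum is the coefficient of `Xⁿ` in the
quotient of these two products. After cancellation this quotient is either
`1 / ∏_{n≤i≤n'} (1 - q^i X)`, with `Xⁿ`-coefficient `q^{n²} [n', n]`, or, when `n' < n`, the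
polynomial `∏_{n'<i<n} (1 - q^i X)` of degree `< n`.
-/

open Finset PowerSeries

section QBinom

variable {q : ℂ}

lemma qPoch_self_zero (q : ℂ) : qPoch q q 0 = 1 := by simp [qPoch]

lemma qPoch_self_succ (q : ℂ) (k : ℕ) :
    qPoch q q (k + 1) = qPoch q q k * (1 - q ^ (k + 1)) := by
  simp [qPoch, prod_range_succ, pow_succ']

lemma one_sub_pow_succ_ne_zero (hq : ¬IsOfFinOrder q) (k : ℕ) : 1 - q ^ (k + 1) ≠ 0 :=
  fun h => hq (isOfFinOrder_iff_pow_eq_one.2 ⟨k + 1, k.succ_pos, (sub_eq_zero.1 h).symm⟩)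

lemma qPoch_self_ne_zero (hq : ¬IsOfFinOrder q) (k : ℕ) : qPoch q q k ≠ 0 := by
  induction k with
  | zero => simp [qPoch_self_zero]
  | succ k ih => rw [qPoch_self_succ]; exact mul_ne_zero ih (one_sub_pow_succ_ne_zero hq k)

lemma qBinom_zero_right (hq : ¬IsOfFinOrder q) (M : ℕ) : qBinom q M 0 = 1 := by
  rw [qBinom, if_pos M.zero_le, Nat.sub_zero, qPoch_self_zero, one_mul,
    div_self (qPoch_self_ne_zero hq M)]

lemma qBinom_self (hq : ¬IsOfFinOrder q) (M : ℕ) : qBinom q M M = 1 := by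
  rw [qBinom, if_pos le_rfl, Nat.sub_self, qPoch_self_zero, mul_one,
    div_self (qPoch_self_ne_zero hq M)]

lemma qBinom_of_lt (q : ℂ) {M N : ℕ} (h : M < N) : qBinom q M N = 0 := by
  simp [qBinom, not_le.2 h]

lemma qBinom_sub (q : ℂ) {M N : ℕ} (h : N ≤ M) : qBinom q M (M - N) = qBinom q M N := by
  rw [qBinom, qBinom, if_pos (Nat.sub_le _ _), if_pos h, Nat.sub_sub_self h, mul_comm]

lemma qBinom_succ_succ (hq : ¬IsOfFinOrder q) (N K : ℕ) :
    qBinom q (N + 1) (K + 1) = qBinom q N (K + 1) + q ^ (N - K) * qBinom q N K := by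
  rcases lt_trichotomy N K with h | rfl | h
  · simp [qBinom_of_lt q h, qBinom_of_lt q (Nat.succ_lt_succ h),
      qBinom_of_lt q (h.trans K.lt_succ_self)]
  · simp [qBinom_self hq, qBinom_of_lt q N.lt_succ_self]
  · obtain ⟨d, rfl⟩ : ∃ d, N = K + d + 1 := ⟨N - K - 1, by omega⟩
    have hP := qPoch_self_ne_zero hq
    have hu := one_sub_pow_succ_ne_zero hq
    rw [qBinom, qBinom, qBinom, if_pos (by omega), if_pos (by omega), if_pos (by omega),
      show K + d + 1 + 1 - (K + 1) = d + 1 by omega, show K + d + 1 - (K + 1) = d by omega,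
      show K + d + 1 - K = d + 1 by omega, qPoch_self_succ q (K + d + 1), qPoch_self_succ q d,
      qPoch_self_succ q K]
    field_simp [hP K, hP d, hP (K + d + 1), hu K, hu d, hu (K + d + 1)]
    ring

end QBinom

section Series

noncomputable def qProdSeries (q a : ℂ) (k : ℕ) : PowerSeries ℂ :=
  ∏ i ∈ range k, (1 - C (a * q ^ i) * X)

noncomputable def qBinomSeries (q a : ℂ) (m : ℕ) : PowerSeries ℂ :=
  mk fun j => a ^ j * qBinom q (m + j) j

lemma coeff_zero_one_sub_C_mul_X_mul (c : ℂ) (φ : PowerSeries ℂ) :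
    coeff 0 ((1 - C c * X) * φ) = coeff 0 φ := by
  simp [sub_mul, mul_assoc]

lemma coeff_succ_one_sub_C_mul_X_mul (c : ℂ) (φ : PowerSeries ℂ) (k : ℕ) :
    coeff (k + 1) ((1 - C c * X) * φ) = coeff (k + 1) φ - c * coeff k φ := by
  rw [sub_mul, one_mul, map_sub, mul_assoc, coeff_C_mul, coeff_succ_X_mul]

lemma qProdSeries_succ (q a : ℂ) (k : ℕ) :
    qProdSeries q a (k + 1) = (1 - C (a * q ^ k) * X) * qProdSeries q a k := by
  rw [qProdSeries, prod_range_succ, mul_comm, qProdSeries]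

lemma qProdSeries_add (q : ℂ) (k l : ℕ) :
    qProdSeries q 1 (k + l) = qProdSeries q 1 k * qProdSeries q (q ^ k) l := by
  simp only [qProdSeries, prod_range_add, one_mul, pow_add]

variable {q : ℂ}

lemma coeff_qProdSeries (hq : ¬IsOfFinOrder q) (a : ℂ) (k s : ℕ) :
    coeff s (qProdSeries q a k) = (-1) ^ s * a ^ s * q ^ (s * (s - 1) / 2) * qBinom q k s := by
  induction k generalizing s with
  | zero =>
    cases s with
    | zero => simp [qProdSeries, qBinom_zero_right hq]
    | succ t => simp [qProdSeries, qBinom_of_lt q t.succ_pos]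
  | succ k ih =>
    rw [qProdSeries_succ]
    cases s with
    | zero =>
      rw [coeff_zero_one_sub_C_mul_X_mul, ih]
      simp [qBinom_zero_right hq]
    | succ t =>
      rw [coeff_succ_one_sub_C_mul_X_mul, ih, ih]
      rcases le_or_gt t k with h | h
      · have hpow : q ^ k * q ^ (t * (t - 1) / 2) =
            q ^ ((t + 1) * (t + 1 - 1) / 2) * q ^ (k - t) := by
          rw [← pow_add, ← pow_add, Nat.triangle_succ]
          congr 1
          omega
        rw [qBinom_succ_succ hq k t]
        linear_combination ((-1 : ℂ) ^ (t + 1) * a ^ (t + 1) * qBinom q k t) * hpow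
      · simp [qBinom_of_lt q h, qBinom_of_lt q (h.trans t.lt_succ_self),
          qBinom_of_lt q (Nat.succ_lt_succ h)]

lemma one_sub_C_mul_X_mul_qBinomSeries_zero (hq : ¬IsOfFinOrder q) (a : ℂ) :
    (1 - C a * X) * qBinomSeries q a 0 = 1 := by
  ext (_ | k)
  · simp [qBinomSeries, qBinom_zero_right hq]
  · simp [coeff_succ_one_sub_C_mul_X_mul, qBinomSeries, qBinom_self hq, coeff_one, pow_succ]
    ring

lemma one_sub_C_mul_X_mul_qBinomSeries_succ (hq : ¬IsOfFinOrder q) (a : ℂ) (m : ℕ) :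
    (1 - C (a * q ^ (m + 1)) * X) * qBinomSeries q a (m + 1) = qBinomSeries q a m := by
  ext (_ | k)
  · simp [qBinomSeries, qBinom_zero_right hq]
  · have pascal := qBinom_succ_succ hq (m + 1 + k) k
    rw [show m + 1 + k - k = m + 1 by omega, show m + 1 + k = m + (k + 1) by ring] at pascal
    rw [coeff_succ_one_sub_C_mul_X_mul, qBinomSeries, coeff_mk, coeff_mk, qBinomSeries, coeff_mk,
      show m + 1 + (k + 1) = m + (k + 1) + 1 by ring, pascal, show m + 1 + k = m + (k + 1) by ring]
    ring

lemma qProdSeries_mul_qBinomSeries (hq : ¬IsOfFinOrder q) (a : ℂ) (m : ℕ) :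
    qProdSeries q a (m + 1) * qBinomSeries q a m = 1 := by
  induction m with
  | zero =>
    simpa [qProdSeries] using one_sub_C_mul_X_mul_qBinomSeries_zero hq a
  | succ m ih =>
    rw [qProdSeries_succ, mul_assoc, mul_left_comm, one_sub_C_mul_X_mul_qBinomSeries_succ hq, ih]

lemma coeff_qProdSeries_mul_qBinomSeries (hq : ¬IsOfFinOrder q) (n m : ℕ) :
    coeff n (qProdSeries q 1 n * qBinomSeries q 1 m) = q ^ (n ^ 2) * qBinom q m n := by
  rcases le_or_gt n m with h | h
  · have hsplit :
        qProdSeries q 1 (m + 1) = qProdSeries q 1 n * qProdSeries q (q ^ n) (m - n + 1) := by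
      rw [← qProdSeries_add, show n + (m - n + 1) = m + 1 by omega]
    have hquot : qProdSeries q 1 n * qBinomSeries q 1 m = qBinomSeries q (q ^ n) (m - n) := by
      calc qProdSeries q 1 n * qBinomSeries q 1 m
          = qProdSeries q 1 n * qBinomSeries q 1 m *
              (qProdSeries q (q ^ n) (m - n + 1) * qBinomSeries q (q ^ n) (m - n)) := by
            rw [qProdSeries_mul_qBinomSeries hq, mul_one]
        _ = qProdSeries q 1 (m + 1) * qBinomSeries q 1 m * qBinomSeries q (q ^ n) (m - n) := by
            rw [hsplit]; ring
        _ = qBinomSeries q (q ^ n) (m - n) := by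
            rw [qProdSeries_mul_qBinomSeries hq, one_mul]
    rw [hquot, qBinomSeries, coeff_mk, Nat.sub_add_cancel h, ← pow_mul, sq]
  · have hsplit : qProdSeries q 1 n =
        qProdSeries q 1 (m + 1) * qProdSeries q (q ^ (m + 1)) (n - (m + 1)) := by
      rw [← qProdSeries_add, Nat.add_sub_cancel' h]
    rw [hsplit, mul_right_comm, qProdSeries_mul_qBinomSeries hq, one_mul, coeff_qProdSeries hq,
      qBinom_of_lt q (show n - (m + 1) < n by omega), qBinom_of_lt q h]
    ring

theorem sum_qBinom_mul_qBinom (hq : ¬IsOfFinOrder q) (n m : ℕ) :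
    ∑ s ∈ range (n + 1), (-1 : ℂ) ^ (n - s) * q ^ ((n - s) * (n - s - 1) / 2)
        * qBinom q n s * qBinom q (s + m) s = q ^ (n ^ 2) * qBinom q m n := by
  rw [← coeff_qProdSeries_mul_qBinomSeries hq, coeff_mul,
    Nat.sum_antidiagonal_eq_sum_range_succ (fun i j => coeff i (qProdSeries q 1 n) *
      coeff j (qBinomSeries q 1 m)), ← sum_range_reflect]
  refine sum_congr rfl fun s hs => ?_
  have hsn : s ≤ n := Nat.lt_succ_iff.mp (mem_range.mp hs)
  rw [show n + 1 - 1 - s = n - s by omega, show n - (n - s) = s by omega, coeff_qProdSeries hq,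
    qBinomSeries, coeff_mk, one_pow, one_pow, qBinom_sub q hsn, add_comm m]
  ring

end Series

theorem Phi_evaluation_general (q : ℂ)
    (hq1 : ‖q‖ < 1) (n n' : ℕ) :
    (∑ s ∈ Finset.range (n + 1),
      (-1 : ℂ) ^ (n - s) * q ^ ((n - s) * (n - s - 1) / 2) * qPoch q q (s + n') /
        (qPoch q q s ^ 2 * qPoch q q (n - s))) =
      q ^ (n ^ 2) * qPoch q q n' * qBinom q n' n / qPoch q q n ∧
    (n' < n →
      (∑ s ∈ Finset.range (n + 1),
        (-1 : ℂ) ^ (n - s) * q ^ ((n - s) * (n - s - 1) / 2) * qPoch q q (s + n') /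
          (qPoch q q s ^ 2 * qPoch q q (n - s))) = 0) := by
  have hq : ¬IsOfFinOrder q := fun h => hq1.ne h.norm_eq_one
  have hP := qPoch_self_ne_zero hq
  have hterm : ∀ s ∈ range (n + 1),
      (-1 : ℂ) ^ (n - s) * q ^ ((n - s) * (n - s - 1) / 2) * qPoch q q (s + n') /
          (qPoch q q s ^ 2 * qPoch q q (n - s)) =
        qPoch q q n' / qPoch q q n *
          ((-1 : ℂ) ^ (n - s) * q ^ ((n - s) * (n - s - 1) / 2) *
            qBinom q n s * qBinom q (s + n') s) := by
    intro s hs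
    rw [qBinom, qBinom, if_pos (Nat.lt_succ_iff.mp (mem_range.mp hs)), if_pos (s.le_add_right n'),
      Nat.add_sub_cancel_left]
    field_simp [hP s, hP n, hP n', hP (n - s), hP (s + n')]
  have hsum := (sum_congr rfl hterm).trans (by rw [← mul_sum, sum_qBinom_mul_qBinom hq])
  refine ⟨hsum.trans (by field_simp [hP n]), fun hlt => ?_⟩
  rw [hsum, qBinom_of_lt q hlt]
  ring

/-- Equation (5.6): the evaluation of the sum `Φ_{n,n'}(q)` from Section 5,
proved via the second q-Chu–Vandermonde summation; in particular the sum
vanishes whenever `n > n'`. -/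
theorem Phi_evaluation (q : ℂ)
    (hq0 : 0 < ‖q‖) (hq1 : ‖q‖ < 1) (n n' : ℕ) :
    (∑ s ∈ Finset.range (n + 1),
      (-1 : ℂ) ^ (n - s) * q ^ ((n - s) * (n - s - 1) / 2) * qPoch q q (s + n') /
        (qPoch q q s ^ 2 * qPoch q q (n - s))) =
      q ^ (n ^ 2) * qPoch q q n' * qBinom q n' n / qPoch q q n ∧
    (n' < n →
      (∑ s ∈ Finset.range (n + 1),
        (-1 : ℂ) ^ (n - s) * q ^ ((n - s) * (n - s - 1) / 2) * qPoch q q (s + n') /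
          (qPoch q q s ^ 2 * qPoch q q (n - s))) = 0) :=
  Phi_evaluation_general q hq1 n n'
end

section
/- Let q, t ∈ ℂ with |q| < 1 and t q^k ≠ 1 for every integer k ≥ 0, and let N ∈ ℕ. Then both series below converge absolutely and (t;q)_∞ (q;q)_∞ · Σ_{r ≥ 0} q^{r(N+1)} / ((t;q)_r (q;q)_r) = Σ_{r ≥ 0} (−1)^r t^r q^{r(r−1)/2} (q;q)_{N+r} / (q;q)_r. -/
/-!
Both sides are evaluated with Euler's two expansions `1 / (z;q)_∞ = ∑ z^r / (q;q)_r` (for `‖z‖ < 1`)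
and `(w;q)_∞ = ∑ (-1)^r q^(r(r-1)/2) w^r / (q;q)_r`. Each follows from the `q`-difference equation
of its series, iterated `n` times and passed to the limit `q^n w → 0`.
Writing `(t;q)_∞ / (t;q)_r = (t q^r;q)_∞` and expanding it by the second identity turns the left
side into an absolutely convergent double series. Summed in the other order, its inner sums are
`1 / (q^(N+s+1);q)_∞ = (q;q)_(N+s) / (q;q)_∞` by the first identity.
-/

open Finset

open Filter Topology

namespace QPochhammer

variable {q : ℂ}

lemma qPoch_zero (a q : ℂ) : qPoch a q 0 = 1 := prod_range_zero _

lemma qPoch_succ (a q : ℂ) (n : ℕ) : qPoch a q (n + 1) = qPoch a q n * (1 - a * q ^ n) :=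
  prod_range_succ _ _

lemma qPoch_ne_zero {a : ℂ} (ha : ∀ k : ℕ, a * q ^ k ≠ 1) (n : ℕ) : qPoch a q n ≠ 0 :=
  prod_ne_zero_iff.2 fun k _ => sub_ne_zero.2 (ha k).symm

lemma norm_pow_mul_le (hq : ‖q‖ ≤ 1) (w : ℂ) (n : ℕ) : ‖q ^ n * w‖ ≤ ‖w‖ := by
  rw [norm_mul, norm_pow]
  exact mul_le_of_le_one_left (norm_nonneg w) (pow_le_one₀ (norm_nonneg q) hq)

lemma mul_pow_ne_one {a : ℂ} (ha : ‖a‖ < 1) (hq : ‖q‖ ≤ 1) (k : ℕ) : a * q ^ k ≠ 1 := by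
  intro h
  have h' := (norm_pow_mul_le hq a k).trans_lt ha
  rw [mul_comm, h, norm_one] at h'
  exact h'.false

lemma summable_norm_neg_mul_pow (hq : ‖q‖ < 1) (a : ℂ) : Summable fun i : ℕ => ‖-(a * q ^ i)‖ := by
  simpa only [norm_neg, norm_mul, norm_pow] using
    (summable_geometric_of_lt_one (norm_nonneg q) hq).mul_left ‖a‖

lemma multipliable_one_sub_mul_pow (hq : ‖q‖ < 1) (a : ℂ) :
    Multipliable fun i : ℕ => 1 - a * q ^ i := by
  simpa only [sub_eq_add_neg] using
    multipliable_one_add_of_summable (summable_norm_neg_mul_pow hq a)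

lemma tendsto_qPoch (hq : ‖q‖ < 1) (a : ℂ) :
    Tendsto (qPoch a q) atTop (𝓝 (qPochInf a q)) :=
  (multipliable_one_sub_mul_pow hq a).hasProd.tendsto_prod_nat

lemma qPochInf_ne_zero (hq : ‖q‖ < 1) {a : ℂ} (ha : ∀ k : ℕ, a * q ^ k ≠ 1) :
    qPochInf a q ≠ 0 := by
  have h := tprod_one_add_ne_zero_of_summable (f := fun k => -(a * q ^ k))
    (fun k => by rw [← sub_eq_add_neg]; exact sub_ne_zero.2 (ha k).symm)
    (summable_norm_neg_mul_pow hq a)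
  simpa only [qPochInf, ← sub_eq_add_neg] using h

lemma qPochInf_eq_qPoch_mul (hq : ‖q‖ < 1) (a : ℂ) (n : ℕ) :
    qPochInf a q = qPoch a q n * qPochInf (a * q ^ n) q := by
  have h : Multipliable fun i : ℕ => 1 - a * q ^ (i + n) :=
    (multipliable_one_sub_mul_pow hq (a * q ^ n)).congr fun i => by ring
  rw [qPochInf, ← Multipliable.prod_mul_tprod_nat_mul' (f := fun i => 1 - a * q ^ i) h, qPoch,
    qPochInf]
  exact congrArg _ (tprod_congr fun i => by ring)

lemma exists_norm_inv_qPoch_le (hq : ‖q‖ < 1) {a : ℂ} (ha : ∀ k : ℕ, a * q ^ k ≠ 1) :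
    ∃ C, ∀ n, ‖(qPoch a q n)⁻¹‖ ≤ C := by
  obtain ⟨C, hC⟩ := isBounded_iff_forall_norm_le.1 <| Metric.isBounded_range_of_tendsto _ <|
    (tendsto_qPoch hq a).inv₀ (qPochInf_ne_zero hq ha)
  exact ⟨C, fun n => hC _ ⟨n, rfl⟩⟩

lemma triangle_succ (r : ℕ) : (r + 1) * (r + 1 - 1) / 2 = r * (r - 1) / 2 + r := by
  rw [← sum_range_id, ← sum_range_id, sum_range_succ]

lemma summable_pow_triangle_mul_pow {c : ℝ} (hc₀ : 0 ≤ c) (hc : c < 1) (M : ℝ) :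
    Summable fun r : ℕ => c ^ (r * (r - 1) / 2) * M ^ r := by
  have hlim : Tendsto (fun r : ℕ => c ^ r * |M|) atTop (𝓝 0) := by
    simpa using (tendsto_pow_atTop_nhds_zero_of_lt_one hc₀ hc).mul_const |M|
  refine summable_of_ratio_norm_eventually_le (by norm_num : (1 / 2 : ℝ) < 1) ?_
  filter_upwards [hlim.eventually_le_const (by norm_num : (0 : ℝ) < 1 / 2)] with r hr
  simp only [triangle_succ, norm_mul, norm_pow, Real.norm_eq_abs, abs_of_nonneg hc₀]
  calc c ^ (r * (r - 1) / 2 + r) * |M| ^ (r + 1)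
      = (c ^ (r * (r - 1) / 2) * |M| ^ r) * (c ^ r * |M|) := by ring
    _ ≤ (c ^ (r * (r - 1) / 2) * |M| ^ r) * (1 / 2) := by gcongr
    _ = 1 / 2 * (c ^ (r * (r - 1) / 2) * |M| ^ r) := mul_comm _ _

noncomputable def eulerCoeff (q : ℂ) (r : ℕ) : ℂ := (-1) ^ r * q ^ (r * (r - 1) / 2) / qPoch q q r

lemma summable_norm_inv_qPoch_mul_pow (hq : ‖q‖ < 1) {ρ : ℝ} (hρ₀ : 0 ≤ ρ) (hρ : ρ < 1) :
    Summable fun r : ℕ => ‖(qPoch q q r)⁻¹‖ * ρ ^ r := by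
  obtain ⟨C, hC⟩ := exists_norm_inv_qPoch_le hq (mul_pow_ne_one hq hq.le)
  refine .of_nonneg_of_le (fun r => by positivity) (fun r => ?_)
    ((summable_geometric_of_lt_one hρ₀ hρ).mul_left C)
  exact mul_le_mul_of_nonneg_right (hC r) (by positivity)

lemma summable_norm_eulerCoeff_mul_pow (hq : ‖q‖ < 1) {ρ : ℝ} (hρ₀ : 0 ≤ ρ) :
    Summable fun r : ℕ => ‖eulerCoeff q r‖ * ρ ^ r := by
  obtain ⟨C, hC⟩ := exists_norm_inv_qPoch_le hq (mul_pow_ne_one hq hq.le)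
  refine .of_nonneg_of_le (fun r => by positivity) (fun r => ?_)
    ((summable_pow_triangle_mul_pow (norm_nonneg q) hq ρ).mul_left C)
  rw [eulerCoeff, div_eq_mul_inv, norm_mul, norm_mul, norm_pow, norm_pow, norm_neg, norm_one,
    one_pow, one_mul]
  calc ‖q‖ ^ (r * (r - 1) / 2) * ‖(qPoch q q r)⁻¹‖ * ρ ^ r
      = ‖(qPoch q q r)⁻¹‖ * (‖q‖ ^ (r * (r - 1) / 2) * ρ ^ r) := by ring
    _ ≤ C * (‖q‖ ^ (r * (r - 1) / 2) * ρ ^ r) := by gcongr; exact hC r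

lemma inv_qPoch_succ_mul (hq : ‖q‖ < 1) (r : ℕ) :
    (qPoch q q (r + 1))⁻¹ * (1 - q ^ (r + 1)) = (qPoch q q r)⁻¹ := by
  have h : 1 - q ^ (r + 1) ≠ 0 := by
    rw [pow_succ']; exact sub_ne_zero.2 (mul_pow_ne_one hq hq.le r).symm
  rw [qPoch_succ, ← pow_succ', mul_inv, mul_assoc, inv_mul_cancel₀ h, mul_one]

lemma eulerCoeff_succ_mul (hq : ‖q‖ < 1) (r : ℕ) :
    eulerCoeff q (r + 1) * (1 - q ^ (r + 1)) = -(q ^ r * eulerCoeff q r) := by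
  simp only [eulerCoeff, div_eq_mul_inv, triangle_succ]
  calc (-1) ^ (r + 1) * q ^ (r * (r - 1) / 2 + r) * (qPoch q q (r + 1))⁻¹ * (1 - q ^ (r + 1))
      = (-1) ^ (r + 1) * q ^ (r * (r - 1) / 2 + r) *
          ((qPoch q q (r + 1))⁻¹ * (1 - q ^ (r + 1))) := by ring
    _ = -(q ^ r * ((-1) ^ r * q ^ (r * (r - 1) / 2) * (qPoch q q r)⁻¹)) := by
      rw [inv_qPoch_succ_mul hq]; ring

lemma tsum_mul_pow_sub_tsum_mul_pow {c : ℕ → ℂ} {w : ℂ} (h₁ : Summable fun r => c r * w ^ r)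
    (h₂ : Summable fun r => c r * (q * w) ^ r) :
    ∑' r, c r * w ^ r - ∑' r, c r * (q * w) ^ r =
      w * ∑' r, c (r + 1) * (1 - q ^ (r + 1)) * w ^ r := by
  rw [← h₁.tsum_sub h₂, (h₁.sub h₂).tsum_eq_zero_add, ← tsum_mul_left]
  simp only [pow_zero, mul_one, sub_self, zero_add]
  exact tsum_congr fun r => by ring

lemma tendsto_tsum_mul_pow_mul (hq : ‖q‖ < 1) {c : ℕ → ℂ} {w : ℂ}
    (hc : Summable fun r => ‖c r‖ * ‖w‖ ^ r) :
    Tendsto (fun n => ∑' r, c r * (q ^ n * w) ^ r) atTop (𝓝 (c 0)) := by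
  have hx : Tendsto (fun n => q ^ n * w) atTop (𝓝 0) := by
    simpa using (tendsto_pow_atTop_nhds_zero_of_norm_lt_one hq).mul_const w
  have h := tendsto_tsum_of_dominated_convergence hc (g := fun r => c r * 0 ^ r)
    (fun r => (hx.pow r).const_mul (c r))
    (Eventually.of_forall fun n r => by
      rw [norm_mul, norm_pow]; gcongr; exact norm_pow_mul_le hq.le w n)
  rwa [tsum_eq_single 0 fun r hr => by simp [hr], pow_zero, mul_one] at h

theorem hasSum_inv_qPoch_mul_pow (hq : ‖q‖ < 1) {z : ℂ} (hz : ‖z‖ < 1) :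
    HasSum (fun r => (qPoch q q r)⁻¹ * z ^ r) (qPochInf z q)⁻¹ := by
  set G : ℂ → ℂ := fun w => ∑' r, (qPoch q q r)⁻¹ * w ^ r
  have hsum : ∀ w : ℂ, ‖w‖ < 1 → Summable fun r => (qPoch q q r)⁻¹ * w ^ r := fun w hw =>
    .of_norm <| by simpa only [norm_mul, norm_pow] using
      summable_norm_inv_qPoch_mul_pow hq (norm_nonneg w) hw
  have hshift : ∀ w : ℂ, ‖w‖ < 1 → G (q * w) = (1 - w) * G w := fun w hw => by
    have hqw : ‖q * w‖ < 1 := by simpa only [pow_one] using (norm_pow_mul_le hq.le w 1).trans_lt hw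
    have h := tsum_mul_pow_sub_tsum_mul_pow (hsum w hw) (hsum _ hqw)
    simp only [inv_qPoch_succ_mul hq] at h
    linear_combination -h
  have hiter : ∀ n : ℕ, G (q ^ n * z) = qPoch z q n * G z := fun n => by
    induction n with
    | zero => simp [qPoch_zero]
    | succ n ih =>
      rw [pow_succ', mul_assoc, hshift _ ((norm_pow_mul_le hq.le z n).trans_lt hz), ih,
        qPoch_succ]
      ring
  have hprod : qPochInf z q * G z = 1 := by
    refine tendsto_nhds_unique ((tendsto_qPoch hq z).mul_const (G z)) ?_
    simpa [G, hiter, qPoch_zero] using tendsto_tsum_mul_pow_mul hq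
      (summable_norm_inv_qPoch_mul_pow hq (norm_nonneg z) hz)
  rw [← eq_inv_of_mul_eq_one_right hprod]
  exact (hsum z hz).hasSum

theorem hasSum_eulerCoeff_mul_pow (hq : ‖q‖ < 1) (w : ℂ) :
    HasSum (fun r => eulerCoeff q r * w ^ r) (qPochInf w q) := by
  set E : ℂ → ℂ := fun w => ∑' r, eulerCoeff q r * w ^ r
  have hsum : ∀ w : ℂ, Summable fun r => eulerCoeff q r * w ^ r := fun w =>
    .of_norm <| by simpa only [norm_mul, norm_pow] using
      summable_norm_eulerCoeff_mul_pow hq (norm_nonneg w)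
  have hshift : ∀ w : ℂ, E w = (1 - w) * E (q * w) := fun w => by
    have h := tsum_mul_pow_sub_tsum_mul_pow (hsum w) (hsum (q * w))
    have hneg : ∑' r, -(q ^ r * eulerCoeff q r) * w ^ r = -E (q * w) := by
      rw [← tsum_neg]; exact tsum_congr fun r => by ring
    simp only [eulerCoeff_succ_mul hq] at h
    linear_combination h + w * hneg
  have hiter : ∀ n : ℕ, E w = qPoch w q n * E (q ^ n * w) := fun n => by
    induction n with
    | zero => simp [qPoch_zero]
    | succ n ih =>
      rw [ih, hshift (q ^ n * w), qPoch_succ, pow_succ', mul_assoc q]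
      ring
  have hE : Tendsto (fun n => E (q ^ n * w)) atTop (𝓝 1) := by
    simpa only [show eulerCoeff q 0 = 1 by simp [eulerCoeff, qPoch_zero]] using
      tendsto_tsum_mul_pow_mul hq (summable_norm_eulerCoeff_mul_pow hq (norm_nonneg w))
  have hlim := (tendsto_qPoch hq w).mul hE
  simp only [← hiter, mul_one] at hlim
  rw [← tendsto_nhds_unique tendsto_const_nhds hlim]
  exact (hsum w).hasSum

noncomputable def heineKernel (q t : ℂ) (N : ℕ) (p : ℕ × ℕ) : ℂ :=
  (qPoch q q p.1)⁻¹ * q ^ (p.1 * (N + 1)) * (eulerCoeff q p.2 * (t * q ^ p.1) ^ p.2)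

lemma summable_heineKernel (hq : ‖q‖ < 1) (t : ℂ) (N : ℕ) : Summable (heineKernel q t N) := by
  refine .of_norm_bounded (g := fun p : ℕ × ℕ =>
      (‖(qPoch q q p.1)⁻¹‖ * ‖q‖ ^ p.1) * (‖eulerCoeff q p.2‖ * ‖t‖ ^ p.2))
    ((summable_norm_inv_qPoch_mul_pow hq (norm_nonneg q) hq).mul_of_nonneg
      (summable_norm_eulerCoeff_mul_pow hq (norm_nonneg t))
      (fun _ => by positivity) (fun _ => by positivity)) ?_
  rintro ⟨r, s⟩
  have hq_pow : ‖q‖ ^ (r * (N + 1)) ≤ ‖q‖ ^ r :=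
    pow_le_pow_of_le_one (norm_nonneg q) hq.le (Nat.le_mul_of_pos_right r N.succ_pos)
  have ht_pow : ‖t * q ^ r‖ ^ s ≤ ‖t‖ ^ s := by
    rw [mul_comm]; gcongr; exact norm_pow_mul_le hq.le t r
  simp only [heineKernel, norm_mul, norm_pow] at ht_pow ⊢
  gcongr

lemma hasSum_heineKernel_row (hq : ‖q‖ < 1) {t : ℂ} (ht : ∀ k : ℕ, t * q ^ k ≠ 1) (N r : ℕ) :
    HasSum (fun s => heineKernel q t N (r, s))
      (qPochInf t q * (q ^ (r * (N + 1)) / (qPoch t q r * qPoch q q r))) := by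
  have hval : qPochInf t q * (q ^ (r * (N + 1)) / (qPoch t q r * qPoch q q r)) =
      (qPoch q q r)⁻¹ * q ^ (r * (N + 1)) * qPochInf (t * q ^ r) q := by
    rw [qPochInf_eq_qPoch_mul hq t r]
    field_simp [qPoch_ne_zero ht r]
  rw [hval]
  exact ((hasSum_eulerCoeff_mul_pow hq (t * q ^ r)).mul_left _).congr_fun fun s => by
    simp only [heineKernel]

lemma hasSum_heineKernel_col (hq : ‖q‖ < 1) (t : ℂ) (N s : ℕ) :
    HasSum (fun r => heineKernel q t N (r, s))
      ((-1 : ℂ) ^ s * t ^ s * q ^ (s * (s - 1) / 2) * qPoch q q (N + s) / qPoch q q s /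
        qPochInf q q) := by
  have hz : ‖q ^ (N + s + 1)‖ < 1 := by
    rw [norm_pow]; exact pow_lt_one₀ (norm_nonneg q) hq (by omega)
  have hval : (-1 : ℂ) ^ s * t ^ s * q ^ (s * (s - 1) / 2) * qPoch q q (N + s) / qPoch q q s /
        qPochInf q q = eulerCoeff q s * t ^ s * (qPochInf (q ^ (N + s + 1)) q)⁻¹ := by
    rw [qPochInf_eq_qPoch_mul hq q (N + s), ← pow_succ']
    have := qPoch_ne_zero (mul_pow_ne_one hq hq.le) (N + s)
    simp only [eulerCoeff]
    field_simp
  rw [hval]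
  refine ((hasSum_inv_qPoch_mul_pow hq hz).mul_left _).congr_fun fun r => ?_
  simp only [heineKernel]
  ring

end QPochhammer

open QPochhammer in
/-- The transformation of the `r`-sums used in Section 5 (with `N = s_{i-1} + s_i`),
derived from Heine's first transformation of ₂φ₁ series by a limiting argument.
Summability of a complex-valued family is absolute convergence. -/
theorem heine_r_sum_transformation (q t : ℂ)
    (hq : ‖q‖ < 1) (ht : ∀ k : ℕ, t * q ^ k ≠ 1) (N : ℕ) :
    Summable (fun r : ℕ => q ^ (r * (N + 1)) / (qPoch t q r * qPoch q q r)) ∧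
    Summable (fun r : ℕ =>
      (-1 : ℂ) ^ r * t ^ r * q ^ (r * (r - 1) / 2) * qPoch q q (N + r) / qPoch q q r) ∧
    qPochInf t q * qPochInf q q *
        ∑' r : ℕ, q ^ (r * (N + 1)) / (qPoch t q r * qPoch q q r) =
      ∑' r : ℕ,
        (-1 : ℂ) ^ r * t ^ r * q ^ (r * (r - 1) / 2) * qPoch q q (N + r) / qPoch q q r := by
  obtain ⟨S, hS⟩ := summable_heineKernel hq t N
  have hrows := hS.prod_fiberwise (hasSum_heineKernel_row hq ht N)
  have hcols :=
    ((Equiv.prodComm ℕ ℕ).hasSum_iff.2 hS).prod_fiberwise (hasSum_heineKernel_col hq t N)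
  have htInf := qPochInf_ne_zero hq ht
  have hqInf := qPochInf_ne_zero hq (mul_pow_ne_one hq hq.le)
  refine ⟨(summable_mul_left_iff htInf).1 hrows.summable,
    (summable_div_const_iff hqInf).1 hcols.summable, ?_⟩
  rw [mul_comm (qPochInf t q), mul_assoc, ← tsum_mul_left, hrows.tsum_eq, ← hcols.tsum_eq,
    tsum_div_const, mul_div_cancel₀ _ hqInf]
end
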